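/- A connected marked graph whose only T-semi-flows are rational multiples of the all-ones vector has deficiency zero if and only if it is weakly reversible. -/

import Mathlib

/-- Input bag of a transition. -/
def preBag {P T : Type*} (Wm : P → T → ℕ) (t : T) : P → ℕ := fun p => Wm p t

/-- Output bag of a transition. -/
def postBag {P T : Type*} (Wp : P → T → ℕ) (t : T) : P → ℕ := fun p => Wp p t

/-- The finite set of complexes of the net. -/
def complexes {P T : Type*} [Fintype P] [Fintype T] [DecidableEq P]
    (Wm Wp : P → T → ℕ) : Finset (P → ℕ) :=
  (Finset.univ.image (preBag Wm)) ∪ (Finset.univ.image (postBag Wp))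

/-- `c` is a complex of the net. -/
def isComplex {P T : Type*} (Wm Wp : P → T → ℕ) (c : P → ℕ) : Prop :=
  (∃ t, c = preBag Wm t) ∨ (∃ t, c = postBag Wp t)

/-- Arc of the reaction graph. -/
def rarc {P T : Type*} (Wm Wp : P → T → ℕ) (c c' : P → ℕ) : Prop :=
  ∃ t, c = preBag Wm t ∧ c' = postBag Wp t

/-- Weak reversibility: every connected component of the reaction graph is
strongly connected. -/
def weaklyReversible {P T : Type*} (Wm Wp : P → T → ℕ) : Prop :=
  ∀ c c' : P → ℕ, isComplex Wm Wp c → isComplex Wm Wp c' →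
    Relation.ReflTransGen (fun a b => rarc Wm Wp a b ∨ rarc Wm Wp b a) c c' →
    Relation.ReflTransGen (rarc Wm Wp) c c'

/-- The (undirected) reaction graph on the set of complexes. -/
def reactionGraph {P T : Type*} [Fintype P] [Fintype T] [DecidableEq P]
    (Wm Wp : P → T → ℕ) : SimpleGraph {c // c ∈ complexes Wm Wp} :=
  SimpleGraph.fromRel (fun a b => rarc Wm Wp a.1 b.1)

/-- The incidence matrix `W = W⁺ − W⁻` with rational entries. -/
def incidence {P T : Type*} (Wm Wp : P → T → ℕ) : Matrix P T ℚ :=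
  Matrix.of fun p t => (Wp p t : ℚ) - (Wm p t : ℚ)

/-- The deficiency `|C| − ℓ − rank W`, as an integer. -/
noncomputable def deficiency {P T : Type*} [Fintype P] [Fintype T] [DecidableEq P]
    (Wm Wp : P → T → ℕ) : ℤ :=
  (Nat.card {c // c ∈ complexes Wm Wp} : ℤ)
    - (Nat.card (reactionGraph Wm Wp).ConnectedComponent : ℤ)
    - ((incidence Wm Wp).rank : ℤ)

/-- Adjacency of the bipartite net graph on places and transitions. -/
def netAdj {P T : Type*} (Wm Wp : P → T → ℕ) : (P ⊕ T) → (P ⊕ T) → Prop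
  | Sum.inl p, Sum.inr t => Wm p t ≠ 0 ∨ Wp p t ≠ 0
  | Sum.inr t, Sum.inl p => Wm p t ≠ 0 ∨ Wp p t ≠ 0
  | _, _ => False

/-- Connectedness of the Petri net. -/
def netConnected {P T : Type*} (Wm Wp : P → T → ℕ) : Prop :=
  ∀ x y : P ⊕ T, Relation.ReflTransGen (netAdj Wm Wp) x y

/-- Marked graph: all arc weights are at most 1 and every place has exactly one
input transition and exactly one output transition. -/
def isMarkedGraph {P T : Type*} (Wm Wp : P → T → ℕ) : Prop :=
  (∀ p t, Wm p t ≤ 1) ∧ (∀ p t, Wp p t ≤ 1) ∧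
  (∀ p, ∃! t, Wm p t ≠ 0) ∧ (∀ p, ∃! t, Wp p t ≠ 0)


/-!
Let `A` be the incidence matrix of the reaction graph and `Y` the matrix whose columns are the
complexes, so that `W = Y A` and `ker A ⊆ ker W = ℚ·1`. A vector `f` on complexes satisfies
`fᵀ A = 0` iff it is constant on connected components, so `rank A = |C| - ℓ` and the deficiency is
`rank A - rank W`. It therefore vanishes iff `ker A = ker W`, i.e. iff `A 1 = 0`: every complex is
the source and the target of equally many transitions. Pairing `A 1 = 0` with the indicator of the
set of complexes reachable from a given one shows that no arc leaves that set, which gives weak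
reversibility. Conversely, if the graph is weakly reversible, every arc closes up to a cycle, whose
transitions form a nonnegative vector `u ∈ ker A ⊆ ℚ·1` with `u ≠ 0`, so `1 ∈ ker A`.
-/

open Matrix Relation

section LinearAlgebra

variable {m m' n K : Type*} [Field K] [Fintype n]

theorem Matrix.rank_add_finrank_ker_mulVecLin (A : Matrix m n K) :
    A.rank + Module.finrank K (LinearMap.ker A.mulVecLin) = Fintype.card n :=
  (LinearMap.finrank_range_add_finrank_ker A.mulVecLin).trans
    (Module.finrank_fintype_fun_eq_card K)

theorem Matrix.rank_eq_rank_iff_ker_eq {A : Matrix m n K} {B : Matrix m' n K}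
    (h : LinearMap.ker A.mulVecLin ≤ LinearMap.ker B.mulVecLin) :
    A.rank = B.rank ↔ LinearMap.ker A.mulVecLin = LinearMap.ker B.mulVecLin := by
  have hA := A.rank_add_finrank_ker_mulVecLin
  have hB := B.rank_add_finrank_ker_mulVecLin
  refine ⟨fun hrank => Submodule.eq_of_le_of_finrank_eq h (by omega), fun hker => ?_⟩
  rw [hker] at hA
  omega

end LinearAlgebra

theorem sum_cast_eq_one_of_existsUnique_ne_zero {T : Type*} [Fintype T] {w : T → ℕ}
    (hle : ∀ t, w t ≤ 1) (h : ∃! t, w t ≠ 0) : ∑ t, (w t : ℚ) = 1 := by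
  obtain ⟨t, ht, huniq⟩ := h
  rw [Fintype.sum_eq_single t fun s hs => by simpa using mt (huniq s) hs]
  simp [le_antisymm (hle t) (Nat.one_le_iff_ne_zero.2 ht)]

section ReactionGraph

variable {P T : Type*} [Fintype P] [Fintype T] [DecidableEq P] (Wm Wp : P → T → ℕ)

local notation "𝒞" => {c // c ∈ complexes Wm Wp}

def sourceComplex (t : T) : 𝒞 := ⟨preBag Wm t, by simp [complexes]⟩

def targetComplex (t : T) : 𝒞 := ⟨postBag Wp t, by simp [complexes]⟩

def reactionIncidence : Matrix 𝒞 T ℚ :=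
  (Matrix.of fun t =>
    Pi.single (targetComplex Wm Wp t) 1 - Pi.single (sourceComplex Wm Wp t) 1)ᵀ

def complexMatrix : Matrix P 𝒞 ℚ := Matrix.of fun p c => (c.1 p : ℚ)

theorem vecMul_reactionIncidence_apply (f : 𝒞 → ℚ) (t : T) :
    (f ᵥ* reactionIncidence Wm Wp) t = f (targetComplex Wm Wp t) - f (sourceComplex Wm Wp t) := by
  simp [reactionIncidence, vecMul, dotProduct, Pi.single_apply, mul_sub]

theorem complexMatrix_mul_reactionIncidence :
    complexMatrix Wm Wp * reactionIncidence Wm Wp = incidence Wm Wp := by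
  ext p t
  rw [mul_apply_eq_vecMul, vecMul_reactionIncidence_apply]
  rfl

theorem ker_reactionIncidence_le_ker_incidence :
    LinearMap.ker (reactionIncidence Wm Wp).mulVecLin ≤
      LinearMap.ker (incidence Wm Wp).mulVecLin := by
  intro v hv
  simp only [LinearMap.mem_ker, mulVecLin_apply] at hv ⊢
  rw [← complexMatrix_mul_reactionIncidence, ← mulVec_mulVec, hv, mulVec_zero]

theorem reachable_sourceComplex_targetComplex (t : T) :
    (reactionGraph Wm Wp).Reachable (sourceComplex Wm Wp t) (targetComplex Wm Wp t) := by
  by_cases h : sourceComplex Wm Wp t = targetComplex Wm Wp t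
  · rw [h]
  · exact SimpleGraph.Adj.reachable ⟨h, Or.inl ⟨t, rfl, rfl⟩⟩

theorem eq_of_reachable_of_forall_source_eq_target {α : Type*} {f : 𝒞 → α}
    (hf : ∀ t, f (sourceComplex Wm Wp t) = f (targetComplex Wm Wp t)) {c d : 𝒞}
    (h : (reactionGraph Wm Wp).Reachable c d) : f c = f d := by
  obtain ⟨w⟩ := h
  induction w with
  | nil => rfl
  | @cons a b _ hab _ ih =>
    refine Eq.trans ?_ ih
    obtain ⟨-, ⟨t, ha, hb⟩ | ⟨t, hb, ha⟩⟩ := hab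
    · rw [show a = sourceComplex Wm Wp t from Subtype.ext ha,
        show b = targetComplex Wm Wp t from Subtype.ext hb, hf]
    · rw [show a = targetComplex Wm Wp t from Subtype.ext ha,
        show b = sourceComplex Wm Wp t from Subtype.ext hb, hf]

theorem ker_transpose_reactionIncidence_eq_range_funLeft :
    LinearMap.ker (reactionIncidence Wm Wp)ᵀ.mulVecLin =
      LinearMap.range (LinearMap.funLeft ℚ ℚ (reactionGraph Wm Wp).connectedComponentMk) := by
  ext f
  have hker : f ∈ LinearMap.ker (reactionIncidence Wm Wp)ᵀ.mulVecLin ↔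
      ∀ t, f (sourceComplex Wm Wp t) = f (targetComplex Wm Wp t) := by
    simp only [LinearMap.mem_ker, mulVecLin_apply, mulVec_transpose, funext_iff,
      vecMul_reactionIncidence_apply, Pi.zero_apply, sub_eq_zero, eq_comm]
  rw [hker, LinearMap.mem_range]
  constructor
  · intro hf
    refine ⟨fun K => f K.out, funext fun c => ?_⟩
    exact eq_of_reachable_of_forall_source_eq_target Wm Wp hf
      (SimpleGraph.ConnectedComponent.eq.mp ((reactionGraph Wm Wp).connectedComponentMk c).out_eq)
  · rintro ⟨g, rfl⟩ t
    exact congrArg g (SimpleGraph.ConnectedComponent.sound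
      (reachable_sourceComplex_targetComplex Wm Wp t))

theorem rank_reactionIncidence_add_card_connectedComponent :
    (reactionIncidence Wm Wp).rank + Nat.card (reactionGraph Wm Wp).ConnectedComponent =
      Nat.card 𝒞 := by
  have hinj := LinearMap.funLeft_injective_of_surjective ℚ ℚ
    (reactionGraph Wm Wp).connectedComponentMk Quot.mk_surjective
  have hker := congrArg (fun S : Submodule ℚ (𝒞 → ℚ) => Module.finrank ℚ S)
    (ker_transpose_reactionIncidence_eq_range_funLeft Wm Wp)
  rw [LinearMap.finrank_range_of_inj hinj, Module.finrank_pi] at hker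
  have := (reactionIncidence Wm Wp)ᵀ.rank_add_finrank_ker_mulVecLin
  rw [rank_transpose, hker] at this
  simp [Nat.card_eq_fintype_card, this]

theorem source_eq_target_of_reactionIncidence_mulVec_one (h1 : reactionIncidence Wm Wp *ᵥ 1 = 0)
    {f : 𝒞 → ℚ} (hf : ∀ t, f (sourceComplex Wm Wp t) ≤ f (targetComplex Wm Wp t)) (t : T) :
    f (sourceComplex Wm Wp t) = f (targetComplex Wm Wp t) := by
  have hsum : ∑ s, (f (targetComplex Wm Wp s) - f (sourceComplex Wm Wp s)) = 0 := by
    calc ∑ s, (f (targetComplex Wm Wp s) - f (sourceComplex Wm Wp s))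
        = (f ᵥ* reactionIncidence Wm Wp) ⬝ᵥ 1 := by
          simp only [dotProduct_one, vecMul_reactionIncidence_apply]
      _ = 0 := by rw [← dotProduct_mulVec, h1, dotProduct_zero]
  have := (Finset.sum_eq_zero_iff_of_nonneg fun s _ => sub_nonneg.2 (hf s)).1 hsum t
    (Finset.mem_univ t)
  linarith

theorem reflTransGen_rarc_swap_of_reactionIncidence_mulVec_one
    (h1 : reactionIncidence Wm Wp *ᵥ 1 = 0) {a b : P → ℕ} (hab : rarc Wm Wp a b) :
    ReflTransGen (rarc Wm Wp) b a := by
  classical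
  obtain ⟨t, rfl, rfl⟩ := hab
  let f : 𝒞 → ℚ := fun d => if ReflTransGen (rarc Wm Wp) (postBag Wp t) d.1 then 1 else 0
  have hf : ∀ s, f (sourceComplex Wm Wp s) ≤ f (targetComplex Wm Wp s) := fun s => by
    by_cases hs : ReflTransGen (rarc Wm Wp) (postBag Wp t) (preBag Wm s)
    · simp [f, sourceComplex, targetComplex, hs, hs.tail ⟨s, rfl, rfl⟩]
    · simp only [f, sourceComplex, hs, if_false]
      split_ifs <;> norm_num
  have := source_eq_target_of_reactionIncidence_mulVec_one Wm Wp h1 hf t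
  simpa [f, sourceComplex, targetComplex, ReflTransGen.refl] using this

theorem weaklyReversible_of_reactionIncidence_mulVec_one
    (h1 : reactionIncidence Wm Wp *ᵥ 1 = 0) : weaklyReversible Wm Wp := by
  intro c c' _ _ h
  refine reflTransGen_closed (fun a b hab => ?_) c c' h
  rcases hab with hab | hab
  · exact .single hab
  · exact reflTransGen_rarc_swap_of_reactionIncidence_mulVec_one Wm Wp h1 hab

theorem reactionIncidence_mulVec_single_apply [DecidableEq T] (t : T) (d : 𝒞) :
    (reactionIncidence Wm Wp *ᵥ Pi.single t 1) d =
      (if d.1 = postBag Wp t then 1 else 0) - (if d.1 = preBag Wm t then 1 else 0) := by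
  simp [reactionIncidence, Pi.single_apply, Subtype.ext_iff, sourceComplex, targetComplex]

theorem exists_nonneg_reactionIncidence_mulVec_of_reflTransGen {c c' : P → ℕ}
    (h : ReflTransGen (rarc Wm Wp) c c') :
    ∃ v : T → ℚ, 0 ≤ v ∧ ∀ d : 𝒞, (reactionIncidence Wm Wp *ᵥ v) d =
      (if d.1 = c' then 1 else 0) - (if d.1 = c then 1 else 0) := by
  classical
  induction h with
  | refl => exact ⟨0, le_rfl, fun d => by simp⟩
  | tail _ hstep ih =>
    obtain ⟨v, hv, hAv⟩ := ih
    obtain ⟨t, rfl, rfl⟩ := hstep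
    refine ⟨v + Pi.single t 1, add_nonneg hv (Pi.single_nonneg.2 zero_le_one), fun d => ?_⟩
    rw [mulVec_add, Pi.add_apply, hAv, reactionIncidence_mulVec_single_apply]
    ring

theorem exists_reactionIncidence_mulVec_eq_zero_of_weaklyReversible
    (hwr : weaklyReversible Wm Wp) (t : T) :
    ∃ u : T → ℚ, reactionIncidence Wm Wp *ᵥ u = 0 ∧ 0 < u t := by
  classical
  have hpath : ReflTransGen (rarc Wm Wp) (postBag Wp t) (preBag Wm t) :=
    hwr _ _ (.inr ⟨t, rfl⟩) (.inl ⟨t, rfl⟩) (.single (.inr ⟨t, rfl, rfl⟩))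
  obtain ⟨v, hv, hAv⟩ := exists_nonneg_reactionIncidence_mulVec_of_reflTransGen Wm Wp hpath
  refine ⟨v + Pi.single t 1, funext fun d => ?_,
    by simpa using add_pos_of_nonneg_of_pos (hv t) one_pos⟩
  rw [mulVec_add, Pi.add_apply, hAv, reactionIncidence_mulVec_single_apply, Pi.zero_apply]
  ring

theorem reactionIncidence_mulVec_one_of_weaklyReversible
    (hker : LinearMap.ker (reactionIncidence Wm Wp).mulVecLin ≤ ℚ ∙ (1 : T → ℚ))
    (hwr : weaklyReversible Wm Wp) : reactionIncidence Wm Wp *ᵥ 1 = 0 := by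
  cases isEmpty_or_nonempty T with
  | inl _ => rw [Subsingleton.elim (1 : T → ℚ) 0, mulVec_zero]
  | inr h =>
    obtain ⟨u, hAu, hu⟩ :=
      exists_reactionIncidence_mulVec_eq_zero_of_weaklyReversible Wm Wp hwr h.some
    obtain ⟨a, rfl⟩ := Submodule.mem_span_singleton.1 (hker (LinearMap.mem_ker.2 hAu))
    have ha : a ≠ 0 := by rintro rfl; simp at hu
    rw [mulVec_smul] at hAu
    exact (smul_eq_zero.1 hAu).resolve_left ha

end ReactionGraph

section MarkedGraph

variable {P T : Type*} [Fintype T] {Wm Wp : P → T → ℕ}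

theorem isMarkedGraph.incidence_mulVec_one (hmg : isMarkedGraph Wm Wp) :
    incidence Wm Wp *ᵥ 1 = 0 := by
  obtain ⟨hm, hp, hm1, hp1⟩ := hmg
  funext p
  simp only [mulVec, dotProduct, Pi.one_apply, mul_one, incidence, of_apply,
    Finset.sum_sub_distrib, Pi.zero_apply]
  rw [sum_cast_eq_one_of_existsUnique_ne_zero (hp p) (hp1 p),
    sum_cast_eq_one_of_existsUnique_ne_zero (hm p) (hm1 p), sub_self]

theorem isMarkedGraph.ker_incidence_eq_span_one (hmg : isMarkedGraph Wm Wp)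
    (hsf : ∀ v : T → ℚ, (∀ p, ∑ t, incidence Wm Wp p t * v t = 0) →
      ∃ a : ℚ, v = fun _ => a) :
    LinearMap.ker (incidence Wm Wp).mulVecLin = ℚ ∙ (1 : T → ℚ) := by
  refine le_antisymm (fun v hv => ?_) ((Submodule.span_singleton_le_iff_mem _ _).2 ?_)
  · obtain ⟨a, rfl⟩ := hsf v fun p => congrFun (LinearMap.mem_ker.1 hv) p
    exact Submodule.mem_span_singleton.2 ⟨a, funext fun _ => by simp⟩
  · exact LinearMap.mem_ker.2 hmg.incidence_mulVec_one

end MarkedGraph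

theorem stmt2_general {P T : Type*} [Fintype P] [Fintype T] [DecidableEq P]
    (Wm Wp : P → T → ℕ) (hmg : isMarkedGraph Wm Wp)
    (hsf : ∀ v : T → ℚ, (∀ p, ∑ t, incidence Wm Wp p t * v t = 0) →
      ∃ a : ℚ, v = fun _ => a) :
    deficiency Wm Wp = 0 ↔ weaklyReversible Wm Wp := by
  have hkerW := hmg.ker_incidence_eq_span_one hsf
  have hkerA : LinearMap.ker (reactionIncidence Wm Wp).mulVecLin ≤ ℚ ∙ 1 :=
    hkerW ▸ ker_reactionIncidence_le_ker_incidence Wm Wp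
  have hrankA := rank_reactionIncidence_add_card_connectedComponent Wm Wp
  calc deficiency Wm Wp = 0
      ↔ (reactionIncidence Wm Wp).rank = (incidence Wm Wp).rank := by
        unfold deficiency; omega
    _ ↔ LinearMap.ker (reactionIncidence Wm Wp).mulVecLin = ℚ ∙ 1 := by
        rw [rank_eq_rank_iff_ker_eq (ker_reactionIncidence_le_ker_incidence Wm Wp), hkerW]
    _ ↔ ℚ ∙ 1 ≤ LinearMap.ker (reactionIncidence Wm Wp).mulVecLin :=
        ⟨fun h => h.ge, hkerA.antisymm⟩
    _ ↔ reactionIncidence Wm Wp *ᵥ 1 = 0 := by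
        rw [Submodule.span_singleton_le_iff_mem, LinearMap.mem_ker, mulVecLin_apply]
    _ ↔ weaklyReversible Wm Wp :=
      ⟨weaklyReversible_of_reactionIncidence_mulVec_one Wm Wp,
        reactionIncidence_mulVec_one_of_weaklyReversible Wm Wp hkerA⟩

/-- A connected marked graph whose only T-semi-flows are rational multiples of
the all-ones vector has deficiency zero if and only if it is weakly reversible. -/
theorem stmt2 {P T : Type*} [Fintype P] [Fintype T] [DecidableEq P] [DecidableEq T]
    (Wm Wp : P → T → ℕ) (hmg : isMarkedGraph Wm Wp) (hconn : netConnected Wm Wp)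
    (hsf : ∀ v : T → ℚ, (∀ p, ∑ t, incidence Wm Wp p t * v t = 0) →
      ∃ a : ℚ, v = fun _ => a) :
    deficiency Wm Wp = 0 ↔ weaklyReversible Wm Wp :=
  stmt2_general Wm Wp hmg hsf
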